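/- arXiv:1704.00044 — 2 statements merged into one kernel-verified Lean document; each statement's English description precedes it below -/
import Mathlib

section
/- Let W̃ be a random walk with i.i.d. integer-valued steps satisfying W̃_1 ≥ -1 almost surely (downward skip-free). Let S_j be the first hitting time of -j by W̃, i.e., S_j = inf{n ≥ 0 : W̃_n = -j}. Then for all 1 ≤ j ≤ n, P(S_j = n) = (j/n) P(W̃_n = -j). -/
/-!
A cyclic rotation of a path `x` of length `n` preserves its weight `∏ p (x i)` and its endpoint,
so averaging over the `n` rotations shows that `n` times the first-passage weight is the weighted
count of pairs (path ending at `-j`, rotation of it that first reaches `-j` at time `n`). For each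
such path there are exactly `j` such rotations (the cycle lemma): extend `x` periodically, so that
its partial sums `S` satisfy `S (u + n) = S u - j`. The rotation starting at `k` is a first
passage exactly when `S (n + k)` lies strictly below all earlier values of `S`. Because steps are
at least `-1`, the running minimum of `S` drops by exactly one at each such strict record and is
constant otherwise, so the number of records in a window of length `n` is the drop of the running
minimum over it, which periodicity makes equal to `j`.
-/

open Finset

section RunningMin

variable (S : ℕ → ℤ)

def runningMin : ℕ → ℤ
  | 0 => S 0
  | u + 1 => min (runningMin u) (S (u + 1))

variable {S}

theorem runningMin_le {t u : ℕ} (h : t ≤ u) : runningMin S u ≤ S t := by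
  induction u with
  | zero =>
    obtain rfl := Nat.le_zero.1 h
    exact le_rfl
  | succ u ih =>
    rcases Nat.lt_succ_iff_lt_or_eq.1 (Nat.lt_succ_of_le h) with h | rfl
    · exact (min_le_left _ _).trans (ih (by omega))
    · exact min_le_right _ _

theorem exists_runningMin_eq (u : ℕ) : ∃ t ≤ u, runningMin S u = S t := by
  induction u with
  | zero => exact ⟨0, le_rfl, rfl⟩
  | succ u ih =>
    obtain ⟨t, htu, ht⟩ := ih
    rcases min_choice (runningMin S u) (S (u + 1)) with h | h
    · exact ⟨t, by omega, h.trans ht⟩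
    · exact ⟨u + 1, le_rfl, h⟩

theorem lt_runningMin_iff {a : ℤ} {u : ℕ} : a < runningMin S u ↔ ∀ t ≤ u, a < S t := by
  refine ⟨fun h t ht => h.trans_le (runningMin_le ht), fun h => ?_⟩
  obtain ⟨t, htu, ht⟩ := exists_runningMin_eq (S := S) u
  exact ht ▸ h t htu

theorem runningMin_sub_runningMin_succ (hS : ∀ u, S u - 1 ≤ S (u + 1)) (u : ℕ) :
    runningMin S u - runningMin S (u + 1) = if S (u + 1) < runningMin S u then 1 else 0 := by
  have := runningMin_le (S := S) (le_refl u)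
  have := hS u
  simp only [runningMin]
  split_ifs <;> omega

theorem card_filter_lt_runningMin (hS : ∀ u, S u - 1 ≤ S (u + 1)) (a d : ℕ) :
    (#{k ∈ range d | S (a + k + 1) < runningMin S (a + k)} : ℤ) =
      runningMin S a - runningMin S (a + d) := by
  have htelescope := sum_range_sub' (fun k => runningMin S (a + k)) d
  simp only [add_zero] at htelescope
  rw [card_filter, Nat.cast_sum, ← htelescope]
  refine sum_congr rfl fun k _ => ?_
  rw [← add_assoc, runningMin_sub_runningMin_succ hS]
  split_ifs <;> rfl

theorem runningMin_add_period {n j : ℕ} (hper : ∀ u, S (u + n) = S u - j) {u : ℕ}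
    (hu : n ≤ u + 1) : runningMin S (u + n) = runningMin S u - j := by
  apply le_antisymm
  · obtain ⟨t, htu, ht⟩ := exists_runningMin_eq (S := S) u
    rw [ht, ← hper]
    exact runningMin_le (by omega)
  · obtain ⟨t, htu, ht⟩ := exists_runningMin_eq (S := S) (u + n)
    rw [ht]
    rcases le_or_gt t u with htu' | hut
    · have := runningMin_le (S := S) htu'
      omega
    · obtain ⟨s, rfl⟩ : ∃ s, t = s + n := ⟨t - n, by omega⟩
      rw [hper]
      linarith [runningMin_le (S := S) (show s ≤ u by omega)]

theorem card_filter_forall_lt_sub {n j : ℕ} (hn : 0 < n) (hS : ∀ u, S u - 1 ≤ S (u + 1))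
    (hper : ∀ u, S (u + n) = S u - j) :
    #{k ∈ range n | ∀ m < n, -(j : ℤ) < S (k + m) - S k} = j := by
  have hrecord : ∀ k ∈ range n, (∀ m < n, -(j : ℤ) < S (k + m) - S k) ↔
      S (n - 1 + k + 1) < runningMin S (n - 1 + k) := by
    intro k hk
    rw [mem_range] at hk
    rw [show n - 1 + k + 1 = k + n by omega, hper, lt_runningMin_iff]
    constructor
    · intro h t ht
      rcases le_or_gt k t with hkt | htk
      · have := h (t - k) (by omega)
        rw [show k + (t - k) = t by omega] at this
        omega
      · have := h (t + n - k) (by omega)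
        rw [show k + (t + n - k) = t + n by omega, hper] at this
        omega
    · intro h m hm
      have := h (k + m) (by omega)
      omega
  zify
  rw [filter_congr hrecord, card_filter_lt_runningMin hS, runningMin_add_period hper (by omega)]
  ring

end RunningMin

def partialSum {n : ℕ} (x : Fin n → ℤ) (m : ℕ) : ℤ :=
  ∑ i ∈ univ.filter (fun i : Fin n => (i : ℕ) < m), x i

section Rotation

variable {n : ℕ} [NeZero n]

def rotate {α : Type*} (k : Fin n) : (Fin n → α) ≃ (Fin n → α) where
  toFun x i := x (i + k)
  invFun x i := x (i - k)
  left_inv x := funext fun i => congrArg x (sub_add_cancel i k)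
  right_inv x := funext fun i => congrArg x (add_sub_cancel_right i k)

@[simp]
theorem rotate_apply {α : Type*} (k : Fin n) (x : Fin n → α) (i : Fin n) :
    rotate k x i = x (i + k) :=
  rfl

def periodicSum (x : Fin n → ℤ) (m : ℕ) : ℤ :=
  ∑ t ∈ range m, x (Fin.ofNat n t)

theorem periodicSum_succ (x : Fin n → ℤ) (u : ℕ) :
    periodicSum x (u + 1) = periodicSum x u + x (Fin.ofNat n u) :=
  sum_range_succ _ u

theorem periodicSum_add_period (x : Fin n → ℤ) (u : ℕ) :
    periodicSum x (u + n) = periodicSum x u + ∑ i, x i := by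
  have hfull : periodicSum x n = ∑ i, x i := by
    rw [periodicSum, ← Fin.sum_univ_eq_sum_range (fun t => x (Fin.ofNat n t))]
    simp only [Fin.ofNat_val_eq_self]
  rw [periodicSum, add_comm u n, sum_range_add, ← periodicSum, hfull, add_comm]
  congr 1
  refine sum_congr rfl fun t _ => congrArg x (Fin.ext ?_)
  simp

theorem partialSum_rotate (x : Fin n → ℤ) (k : Fin n) {m : ℕ} (hm : m ≤ n) :
    partialSum (rotate k x) m = periodicSum x (k + m) - periodicSum x k := by
  have hrange : (range n).filter (· < m) = range m := by
    ext t
    simp only [mem_filter, mem_range]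
    omega
  rw [periodicSum, sum_range_add, ← periodicSum, add_sub_cancel_left, partialSum, sum_filter,
    ← hrange, sum_filter, ← Fin.sum_univ_eq_sum_range]
  refine sum_congr rfl fun i _ => ?_
  rw [rotate_apply, ← Fin.ofNat_add, Fin.ofNat_val_eq_self, add_comm]

theorem card_filter_partialSum_rotate {j : ℕ} (x : Fin n → ℤ) (hx : ∀ i, -1 ≤ x i)
    (hsum : ∑ i, x i = -j) :
    #{k | ∀ m < n, -(j : ℤ) < partialSum (rotate k x) m} = j := by
  have hS : ∀ u, periodicSum x u - 1 ≤ periodicSum x (u + 1) := fun u => by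
    linarith [periodicSum_succ x u, hx (Fin.ofNat n u)]
  have hper : ∀ u, periodicSum x (u + n) = periodicSum x u - j := fun u => by
    rw [periodicSum_add_period, hsum, sub_eq_add_neg]
  convert card_filter_forall_lt_sub (NeZero.pos n) hS hper using 1
  rw [card_filter, card_filter, ← Fin.sum_univ_eq_sum_range]
  refine sum_congr rfl fun k _ => if_congr ?_ rfl rfl
  exact forall₂_congr fun m hm => by rw [partialSum_rotate x k hm.le]

theorem sum_rotate_ite_firstPassage {R : Type*} [Semiring R] {j : ℕ} (w : (Fin n → ℤ) → R)
    (hw_rotate : ∀ k x, w (rotate k x) = w x) (hw_skip : ∀ x i, x i < -1 → w x = 0)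
    (x : Fin n → ℤ) :
    ∑ k, (if (∀ m < n, -(j : ℤ) < partialSum (rotate k x) m) ∧ ∑ i, rotate k x i = -j
      then w (rotate k x) else 0) = j * if ∑ i, x i = -j then w x else 0 := by
  have hsum_rotate : ∀ k, ∑ i, rotate k x i = ∑ i, x i := fun k =>
    Equiv.sum_comp (Equiv.addRight k) x
  simp only [hsum_rotate, hw_rotate]
  by_cases hsum : ∑ i, x i = -j
  · simp only [hsum, and_true, if_true]
    rw [← sum_filter, sum_const, nsmul_eq_mul]
    by_cases hx : ∀ i, -1 ≤ x i
    · rw [card_filter_partialSum_rotate x hx hsum]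
    · push Not at hx
      obtain ⟨i, hi⟩ := hx
      simp [hw_skip x i hi]
  · simp [hsum]

end Rotation

theorem tsum_sum_comp_equiv {α ι M : Type*} [AddCommMonoid M] [TopologicalSpace M]
    [ContinuousAdd M] [T2Space M] [Fintype ι] {f : α → M} (hf : Summable f) (e : ι → α ≃ α) :
    ∑' x, ∑ k, f (e k x) = Fintype.card ι • ∑' x, f x := by
  rw [Summable.tsum_finsetSum (f := fun k x => f (e k x)) fun k _ => (e k).summable_iff.2 hf]
  simp only [Equiv.tsum_eq, sum_const, card_univ]

theorem summable_prod_comp_of_nonneg {α : Type*} {f : α → ℝ} (hf : Summable f)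
    (hf0 : ∀ a, 0 ≤ f a) : ∀ N, Summable fun x : Fin N → α => ∏ i, f (x i)
  | 0 => .of_finite
  | N + 1 => by
    have hprod := hf.mul_of_nonneg (summable_prod_comp_of_nonneg hf hf0 N) hf0
      fun x => prod_nonneg fun i _ => hf0 (x i)
    refine ((Fin.consEquiv fun _ => α).summable_iff).1 (hprod.congr fun q => ?_)
    simp [Fin.prod_univ_succ]

theorem cyclic_lemma_general (p : ℤ → ℝ) (hpsum : ∑' x : ℤ, p x = 1)
    (hskip : ∀ x : ℤ, x < -1 → p x = 0)
    (j n : ℕ) (hj : 1 ≤ j) (hjn : j ≤ n) :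
    (∑' x : Fin n → ℤ,
      if ((∀ m < n, -(j : ℤ) <
              ∑ i ∈ Finset.univ.filter (fun i : Fin n => (i : ℕ) < m), x i)
          ∧ (∑ i, x i) = -(j : ℤ))
      then ∏ i, p (x i) else 0)
    = ((j : ℝ) / (n : ℝ)) *
      ∑' x : Fin n → ℤ, if (∑ i, x i) = -(j : ℤ) then ∏ i, p (x i) else 0 := by
  have : NeZero n := ⟨by omega⟩
  have hp : Summable p := by
    by_contra h
    simp [tsum_eq_zero_of_not_summable h] at hpsum
  set w : (Fin n → ℤ) → ℝ := fun x => ∏ i, p (x i)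
  change ∑' x : Fin n → ℤ, (if (∀ m < n, -(j : ℤ) < partialSum x m) ∧ ∑ i, x i = -j
    then w x else 0) = j / n * ∑' x : Fin n → ℤ, if ∑ i, x i = -j then w x else 0
  have hF : Summable fun x : Fin n → ℤ =>
      if (∀ m < n, -(j : ℤ) < partialSum x m) ∧ ∑ i, x i = -j then w x else 0 := by
    refine (summable_prod_comp_of_nonneg hp.abs (fun a => abs_nonneg (p a)) n).of_norm_bounded
      fun x => ?_
    split_ifs
    · simp [w]
    · simp [prod_nonneg fun i _ => abs_nonneg (p (x i))]
  have hw_rotate : ∀ k x, w (rotate k x) = w x := fun k x =>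
    Equiv.prod_comp (Equiv.addRight k) (fun i => p (x i))
  have hw_skip : ∀ x i, x i < -1 → w x = 0 := fun x i hi =>
    prod_eq_zero (mem_univ i) (hskip _ hi)
  have key := tsum_sum_comp_equiv hF rotate
  simp only [sum_rotate_ite_firstPassage w hw_rotate hw_skip, tsum_mul_left,
    Fintype.card_fin, nsmul_eq_mul] at key
  rw [div_mul_eq_mul_div, eq_div_iff (Nat.cast_ne_zero.2 (NeZero.ne n)), mul_comm, key]

/-- Cyclic lemma (Kemperman / Otter–Dwass formula) for downward skip-free walks:
if the i.i.d. steps of the walk W̃ have law p on ℤ with p j = 0 for j < -1, then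
for 1 ≤ j ≤ n the probability that the walk first hits -j at time n equals
(j/n) times the probability that W̃_n = -j.  Probabilities of events about the
first n steps are written as sums over the n-step paths x : Fin n → ℤ of the
product of step probabilities. -/
theorem cyclic_lemma (p : ℤ → ℝ) (hpnn : ∀ x, 0 ≤ p x) (hpsum : ∑' x : ℤ, p x = 1)
    (hskip : ∀ x : ℤ, x < -1 → p x = 0)
    (j n : ℕ) (hj : 1 ≤ j) (hjn : j ≤ n) :
    (∑' x : Fin n → ℤ,
      if ((∀ m < n, -(j : ℤ) <
              ∑ i ∈ Finset.univ.filter (fun i : Fin n => (i : ℕ) < m), x i)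
          ∧ (∑ i, x i) = -(j : ℤ))
      then ∏ i, p (x i) else 0)
    = ((j : ℝ) / (n : ℝ)) *
      ∑' x : Fin n → ℤ, if (∑ i, x i) = -(j : ℤ) then ∏ i, p (x i) else 0 :=
  cyclic_lemma_general p hpsum hskip j n hj hjn
end

section
/- Let h : [0,1] → [0,∞) be a continuous function with h(0) = 0. Define d_h(s,t) = h(s) + h(t) - 2 min{h(r) : min(s,t) ≤ r ≤ max(s,t)}. Then d_h is a pseudometric on [0,1], and the quotient metric space T_h = [0,1]/~ (where s ~ t iff d_h(s,t) = 0) is compact. -/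
open Set

/-- The pseudometric on [0,1] coded by a continuous function h:
d_h(s,t) = h(s) + h(t) - 2 min{h(r) : min(s,t) ≤ r ≤ max(s,t)}. -/
noncomputable def treeDist (h : ℝ → ℝ) (s t : ℝ) : ℝ :=
  h s + h t - 2 * sInf (h '' Icc (min s t) (max s t))

open Filter Topology
open scoped Interval

/-! Writing `m(s,t)` for the infimum of `h` on `[[s,t]]`, the triangle inequality for `treeDist h`
amounts to `m(s,t) + m(t,u) ≤ h t + m(s,u)`. It holds because `[[s,u]] ⊆ [[s,t]] ∪ [[t,u]]`
gives `min (m(s,t)) (m(t,u)) ≤ m(s,u)`, while `max (m(s,t)) (m(t,u)) ≤ h t`. Continuity of `h`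
makes the identity from `[0,1]` to `([0,1], treeDist h)` continuous, so the metric quotient,
being a continuous image of a compact space, is compact. -/

section Pseudometric

variable {h : ℝ → ℝ} {s t u : ℝ}

theorem treeDist_eq_uIcc (h : ℝ → ℝ) (s t : ℝ) :
    treeDist h s t = h s + h t - 2 * sInf (h '' [[s, t]]) := rfl

theorem treeDist_self (h : ℝ → ℝ) (s : ℝ) : treeDist h s s = 0 := by
  rw [treeDist_eq_uIcc, uIcc_self, image_singleton, csInf_singleton]
  ring

theorem treeDist_comm (h : ℝ → ℝ) (s t : ℝ) : treeDist h s t = treeDist h t s := by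
  rw [treeDist_eq_uIcc, treeDist_eq_uIcc, uIcc_comm]
  ring

theorem sInf_image_uIcc_le_left (hb : BddBelow (h '' [[s, t]])) : sInf (h '' [[s, t]]) ≤ h s :=
  csInf_le hb (mem_image_of_mem h left_mem_uIcc)

theorem sInf_image_uIcc_le_right (hb : BddBelow (h '' [[s, t]])) : sInf (h '' [[s, t]]) ≤ h t :=
  csInf_le hb (mem_image_of_mem h right_mem_uIcc)

theorem treeDist_nonneg (hb : BddBelow (h '' [[s, t]])) : 0 ≤ treeDist h s t := by
  rw [treeDist_eq_uIcc]
  linarith [sInf_image_uIcc_le_left hb, sInf_image_uIcc_le_right hb]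

theorem min_sInf_image_uIcc_le (hst : BddBelow (h '' [[s, t]])) (htu : BddBelow (h '' [[t, u]])) :
    min (sInf (h '' [[s, t]])) (sInf (h '' [[t, u]])) ≤ sInf (h '' [[s, u]]) := by
  refine le_csInf (nonempty_uIcc.image h) ?_
  rintro _ ⟨r, hr, rfl⟩
  rcases uIcc_subset_uIcc_union_uIcc hr with hr | hr
  · exact (min_le_left _ _).trans (csInf_le hst (mem_image_of_mem h hr))
  · exact (min_le_right _ _).trans (csInf_le htu (mem_image_of_mem h hr))

theorem treeDist_triangle (hst : BddBelow (h '' [[s, t]])) (htu : BddBelow (h '' [[t, u]])) :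
    treeDist h s u ≤ treeDist h s t + treeDist h t u := by
  have key : sInf (h '' [[s, t]]) + sInf (h '' [[t, u]]) ≤ h t + sInf (h '' [[s, u]]) := calc
    _ = min (sInf (h '' [[s, t]])) (sInf (h '' [[t, u]]))
          + max (sInf (h '' [[s, t]])) (sInf (h '' [[t, u]])) := (min_add_max _ _).symm
    _ ≤ sInf (h '' [[s, u]]) + h t :=
      add_le_add (min_sInf_image_uIcc_le hst htu)
        (max_le (sInf_image_uIcc_le_right hst) (sInf_image_uIcc_le_left htu))
    _ = h t + sInf (h '' [[s, u]]) := add_comm _ _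
  simp only [treeDist_eq_uIcc]
  linarith

end Pseudometric

section Continuity

variable {h : ℝ → ℝ} {S : Set ℝ} [S.OrdConnected] {s t : ℝ}

theorem ContinuousOn.bddBelow_image_uIcc (hcont : ContinuousOn h S) (hs : s ∈ S) (ht : t ∈ S) :
    BddBelow (h '' [[s, t]]) :=
  isCompact_uIcc.bddBelow_image (hcont.mono (‹S.OrdConnected›.uIcc_subset hs ht))

/-- If `|h - h t| < ε` near `t`, then `treeDist h s t < 3 ε` for `s` near `t`. -/
theorem tendsto_treeDist_nhdsWithin (hcont : ContinuousOn h S) (ht : t ∈ S) :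
    Tendsto (fun s => treeDist h s t) (𝓝[S] t) (𝓝 0) := by
  rw [Metric.tendsto_nhdsWithin_nhds]
  intro ε hε
  obtain ⟨δ, hδ, hclose⟩ := Metric.continuousWithinAt_iff.mp (hcont t ht) (ε / 3) (by positivity)
  refine ⟨δ, hδ, fun s hs hst => ?_⟩
  have hlower : h t - ε / 3 ∈ lowerBounds (h '' [[s, t]]) := by
    rintro _ ⟨r, hr, rfl⟩
    have hrt : dist r t < δ := (abs_sub_left_of_mem_uIcc (uIcc_comm s t ▸ hr)).trans_lt hst
    have := hclose (‹S.OrdConnected›.uIcc_subset hs ht hr) hrt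
    rw [Real.dist_eq] at this
    linarith [neg_abs_le (h r - h t)]
  have hinf : h t - ε / 3 ≤ sInf (h '' [[s, t]]) := le_csInf (nonempty_uIcc.image h) hlower
  have hs_close : h s - h t < ε / 3 := by
    have := hclose hs hst
    rw [Real.dist_eq] at this
    exact (le_abs_self _).trans_lt this
  rw [Real.dist_0_eq_abs, abs_of_nonneg (treeDist_nonneg ⟨_, hlower⟩), treeDist_eq_uIcc]
  linarith

end Continuity

/-- `S` carrying the pseudometric `treeDist h`. -/
def TreeSpace (_h : ℝ → ℝ) (S : Set ℝ) : Type := S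

namespace TreeSpace

variable {h : ℝ → ℝ} {S : Set ℝ}

def mk (h : ℝ → ℝ) (S : Set ℝ) : S → TreeSpace h S := id

def toSet : TreeSpace h S → S := id

theorem mk_surjective : Function.Surjective (mk h S) := Function.surjective_id

variable [S.OrdConnected] [Fact (ContinuousOn h S)]

noncomputable instance : PseudoMetricSpace (TreeSpace h S) where
  dist x y := treeDist h x.toSet y.toSet
  dist_self x := treeDist_self h _
  dist_comm x y := treeDist_comm h _ _
  dist_triangle x y z :=
    have hcont : ContinuousOn h S := Fact.out
    treeDist_triangle (hcont.bddBelow_image_uIcc x.toSet.2 y.toSet.2)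
      (hcont.bddBelow_image_uIcc y.toSet.2 z.toSet.2)

theorem dist_mk (s t : S) : dist (mk h S s) (mk h S t) = treeDist h s t := rfl

theorem continuous_mk : Continuous (mk h S) := by
  refine continuous_iff_continuousAt.mpr fun t => ?_
  rw [ContinuousAt, tendsto_iff_dist_tendsto_zero]
  exact ((tendsto_nhdsWithin_iff_subtype t.2 _ _).mp
    (tendsto_treeDist_nhdsWithin (h := h) Fact.out t.2) :)

instance [CompactSpace S] : CompactSpace (TreeSpace h S) :=
  (mk_surjective (h := h)).compactSpace continuous_mk

end TreeSpace

theorem treeDist_pseudometric_and_quotient_compact_general (h : ℝ → ℝ)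
    (hcont : ContinuousOn h (Icc (0 : ℝ) 1)) :
    (∀ s ∈ Icc (0 : ℝ) 1, treeDist h s s = 0) ∧
    (∀ s ∈ Icc (0 : ℝ) 1, ∀ t ∈ Icc (0 : ℝ) 1, 0 ≤ treeDist h s t) ∧
    (∀ s ∈ Icc (0 : ℝ) 1, ∀ t ∈ Icc (0 : ℝ) 1, treeDist h s t = treeDist h t s) ∧
    (∀ s ∈ Icc (0 : ℝ) 1, ∀ t ∈ Icc (0 : ℝ) 1, ∀ u ∈ Icc (0 : ℝ) 1,
      treeDist h s u ≤ treeDist h s t + treeDist h t u) ∧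
    (∃ (X : Type) (_ : MetricSpace X) (q : Icc (0 : ℝ) 1 → X),
      Function.Surjective q ∧ CompactSpace X ∧
      ∀ s t : Icc (0 : ℝ) 1, dist (q s) (q t) = treeDist h s t) := by
  have : Fact (ContinuousOn h (Icc (0 : ℝ) 1)) := ⟨hcont⟩
  refine ⟨fun s _ => treeDist_self h s,
    fun s hs t ht => treeDist_nonneg (hcont.bddBelow_image_uIcc hs ht),
    fun s _ t _ => treeDist_comm h s t,
    fun s hs t ht u hu => treeDist_triangle (hcont.bddBelow_image_uIcc hs ht)
      (hcont.bddBelow_image_uIcc ht hu), ?_⟩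
  exact ⟨SeparationQuotient (TreeSpace h (Icc 0 1)), inferInstance,
    SeparationQuotient.mk ∘ TreeSpace.mk h _,
    SeparationQuotient.surjective_mk.comp TreeSpace.mk_surjective,
    SeparationQuotient.surjective_mk.compactSpace SeparationQuotient.continuous_mk,
    fun s t => (SeparationQuotient.dist_mk _ _).trans (TreeSpace.dist_mk s t)⟩

/-- For a continuous h : [0,1] → [0,∞) with h(0) = 0, the function d_h is a
pseudometric on [0,1] (nonnegative, vanishing on the diagonal, symmetric, and
satisfying the triangle inequality), and the quotient metric space
T_h = [0,1]/{d_h = 0} is compact: there is a compact metric space X and a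
surjection q from [0,1] onto X with dist (q s) (q t) = d_h(s,t). -/
theorem treeDist_pseudometric_and_quotient_compact (h : ℝ → ℝ)
    (hcont : ContinuousOn h (Icc (0 : ℝ) 1))
    (hnonneg : ∀ x ∈ Icc (0 : ℝ) 1, 0 ≤ h x) (h0 : h 0 = 0) :
    (∀ s ∈ Icc (0 : ℝ) 1, treeDist h s s = 0) ∧
    (∀ s ∈ Icc (0 : ℝ) 1, ∀ t ∈ Icc (0 : ℝ) 1, 0 ≤ treeDist h s t) ∧
    (∀ s ∈ Icc (0 : ℝ) 1, ∀ t ∈ Icc (0 : ℝ) 1, treeDist h s t = treeDist h t s) ∧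
    (∀ s ∈ Icc (0 : ℝ) 1, ∀ t ∈ Icc (0 : ℝ) 1, ∀ u ∈ Icc (0 : ℝ) 1,
      treeDist h s u ≤ treeDist h s t + treeDist h t u) ∧
    (∃ (X : Type) (_ : MetricSpace X) (q : Icc (0 : ℝ) 1 → X),
      Function.Surjective q ∧ CompactSpace X ∧
      ∀ s t : Icc (0 : ℝ) 1, dist (q s) (q t) = treeDist h s t) :=
  treeDist_pseudometric_and_quotient_compact_general h hcont
end
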